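/- arXiv:1405.6352 — 4 statements merged into one kernel-verified Lean document; each statement's English description precedes it below -/
import Mathlib

section
/- Let 0 < τ₀ < τ₁ and c ≥ 0, S ∈ ℝ. Suppose v : [S, ∞) → ℝ is twice differentiable, v ≥ 0, v is bounded, v(s) → 0 as s → ∞, and v''(s) ≥ τ₁²·v(s) − c·e^{−τ₀·s} for all s ≥ S. Then there exists a constant C > 0 such that v(s) ≤ C·e^{−τ₀·s} for all s ≥ S. -/
/-!
With `C ≥ c / (τ₁² - τ₀²)` and `C ≥ v(S) e^{τ₀ S}`, the difference `g = v - C e^{-τ₀ s}` satisfies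
`g'' ≥ τ₁² g`, `g(S) ≤ 0` and `g → 0`. By the maximum principle `g ≤ 0`: a positive value would
force a positive maximum of `g` at some `p > S`, where `g''(p) ≤ 0 < τ₁² g(p)`.
-/

open Real Filter Set Topology

theorem IsLocalMax.nonpos_of_hasDerivAt_of_hasDerivAt {f f' : ℝ → ℝ} {a f'' : ℝ}
    (h : IsLocalMax f a) (hf : ∀ᶠ x in 𝓝 a, HasDerivAt f (f' x) x)
    (hf' : HasDerivAt f' f'' a) : f'' ≤ 0 := by
  by_contra! hpos
  have hderiv : deriv f =ᶠ[𝓝 a] f' := hf.mono fun x hx => hx.deriv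
  have hderiv2 : deriv (deriv f) a = f'' := (hf'.congr_of_eventuallyEq hderiv).deriv
  have hmin : IsLocalMin f a := isLocalMin_of_deriv_deriv_pos (hderiv2 ▸ hpos)
    h.deriv_eq_zero hf.self_of_nhds.continuousAt
  have hconst : f =ᶠ[𝓝 a] fun _ => f a := (h.and hmin).mono fun x hx => le_antisymm hx.1 hx.2
  have hderiv_zero : deriv f =ᶠ[𝓝 a] fun _ => 0 :=
    hconst.eventually_nhds.mono fun x hx => by rw [EventuallyEq.deriv_eq hx, deriv_const]
  rw [hderiv_zero.deriv_eq, deriv_const] at hderiv2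
  exact hpos.ne hderiv2

theorem nonpos_of_tendsto_zero_of_pos_imp_deriv_deriv_pos {g g' g'' : ℝ → ℝ} {S : ℝ}
    (hg : ∀ s, S ≤ s → HasDerivAt g (g' s) s) (hg' : ∀ s, S ≤ s → HasDerivAt g' (g'' s) s)
    (hpos : ∀ s, S < s → 0 < g s → 0 < g'' s) (hS : g S ≤ 0)
    (hlim : Tendsto g atTop (𝓝 0)) : ∀ s, S ≤ s → g s ≤ 0 := by
  by_contra! ⟨s₁, hs₁, hgs₁⟩
  have hcont : ContinuousOn g (Ici S) := fun s hs => (hg s hs).continuousAt.continuousWithinAt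
  have hfar : ∀ᶠ x in cocompact ℝ ⊓ 𝓟 (Ici S), g x ≤ g s₁ := by
    rw [cocompact_eq_atBot_atTop, inf_sup_right, eventually_sup]
    refine ⟨?_, ?_⟩
    · rw [disjoint_iff.mp (disjoint_atBot_principal_Ici S)]
      exact eventually_bot
    · exact ((hlim.eventually (gt_mem_nhds hgs₁)).mono fun x hx => hx.le).filter_mono inf_le_left
  obtain ⟨p, hp, hmax⟩ := hcont.exists_isMaxOn' isClosed_Ici hs₁ hfar
  have hgp : 0 < g p := hgs₁.trans_le (hmax hs₁)
  have hSp : S < p := lt_of_le_of_ne hp fun h => by rw [← h] at hgp; linarith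
  have hlocal : IsLocalMax g p := hmax.isLocalMax (Ici_mem_nhds hSp)
  have hderiv : ∀ᶠ x in 𝓝 p, HasDerivAt g (g' x) x :=
    eventually_of_mem (Ici_mem_nhds hSp) fun x hx => hg x hx
  exact (hpos p hSp hgp).not_ge (hlocal.nonpos_of_hasDerivAt_of_hasDerivAt hderiv (hg' p hp))

theorem HasDerivAt.add_const_mul_exp {f : ℝ → ℝ} {f' a C x : ℝ} (hf : HasDerivAt f f' x) :
    HasDerivAt (fun y => f y + C * Real.exp (a * y)) (f' + C * a * Real.exp (a * x)) x := by
  have hexp : HasDerivAt (fun y => Real.exp (a * y)) (Real.exp (a * x) * a) x :=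
    ((hasDerivAt_id x).const_mul a).exp.congr_deriv (by simp)
  exact (hf.add (hexp.const_mul C)).congr_deriv (by ring)

theorem stmt6_general (τ₀ τ₁ c S : ℝ) (h0 : 0 < τ₀) (h01 : τ₀ < τ₁)
    (v v' v'' : ℝ → ℝ)
    (hd1 : ∀ s, S ≤ s → HasDerivAt v (v' s) s)
    (hd2 : ∀ s, S ≤ s → HasDerivAt v' (v'' s) s)
    (hineq : ∀ s, S ≤ s → τ₁ ^ 2 * v s - c * Real.exp (-τ₀ * s) ≤ v'' s)
    (hlim : Filter.Tendsto v Filter.atTop (nhds 0)) :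
    ∃ C : ℝ, 0 < C ∧ ∀ s, S ≤ s → v s ≤ C * Real.exp (-τ₀ * s) := by
  have hgap : 0 < τ₁ ^ 2 - τ₀ ^ 2 := by nlinarith
  set C := max (max (c / (τ₁ ^ 2 - τ₀ ^ 2)) (v S * exp (τ₀ * S))) 1
  have hCc : c ≤ C * (τ₁ ^ 2 - τ₀ ^ 2) :=
    (div_le_iff₀ hgap).1 ((le_max_left _ _).trans (le_max_left _ _))
  have hCS : v S ≤ C * exp (-τ₀ * S) := by
    have h : v S * exp (τ₀ * S) ≤ C := (le_max_right _ _).trans (le_max_left _ _)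
    rwa [← le_div_iff₀ (exp_pos _), div_eq_mul_inv, ← exp_neg, ← neg_mul] at h
  have hg_nonpos := nonpos_of_tendsto_zero_of_pos_imp_deriv_deriv_pos
    (g := fun s => v s + -C * exp (-τ₀ * s))
    (fun s hs => (hd1 s hs).add_const_mul_exp) (fun s hs => (hd2 s hs).add_const_mul_exp)
    (fun s hs hpos => by
      nlinarith [hineq s hs.le, mul_le_mul_of_nonneg_right hCc (exp_pos (-τ₀ * s)).le,
        mul_pos (pow_pos (h0.trans h01) 2) hpos])
    (by linarith)
    (by simpa using hlim.add ((tendsto_exp_atBot.comp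
      (tendsto_id.const_mul_atTop_of_neg (neg_neg_of_pos h0))).const_mul (-C)))
  exact ⟨C, lt_max_of_lt_right one_pos, fun s hs => by linarith [hg_nonpos s hs]⟩

/-- Forced differential inequality from the proof of Proposition 4.9 of the paper:
`v'' ≥ τ₁²·v − c·e^{−τ₀·s}` with `0 < τ₀ < τ₁`, `v ≥ 0` bounded and `v → 0` at infinity
implies `v(s) ≤ C·e^{−τ₀·s}`. -/
theorem stmt6 (τ₀ τ₁ c S : ℝ) (h0 : 0 < τ₀) (h01 : τ₀ < τ₁) (hc : 0 ≤ c)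
    (v v' v'' : ℝ → ℝ)
    (hd1 : ∀ s, S ≤ s → HasDerivAt v (v' s) s)
    (hd2 : ∀ s, S ≤ s → HasDerivAt v' (v'' s) s)
    (hnn : ∀ s, S ≤ s → 0 ≤ v s)
    (hbd : ∃ M : ℝ, ∀ s, S ≤ s → v s ≤ M)
    (hineq : ∀ s, S ≤ s → τ₁ ^ 2 * v s - c * Real.exp (-τ₀ * s) ≤ v'' s)
    (hlim : Filter.Tendsto v Filter.atTop (nhds 0)) :
    ∃ C : ℝ, 0 < C ∧ ∀ s, S ≤ s → v s ≤ C * Real.exp (-τ₀ * s) :=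
  stmt6_general τ₀ τ₁ c S h0 h01 v v' v'' hd1 hd2 hineq hlim
end

section
/- Let (X, d) be a metric space, f : X → ℝ a continuous nonnegative function, x ∈ X and δ > 0 such that the closed ball of radius 2δ around x is complete. Then there exist ξ ∈ X and ε ∈ (0, δ] such that: d(x, ξ) < 2δ; sup_{y ∈ B_ε(ξ)} f(y) ≤ 2·f(ξ); and ε·f(ξ) ≥ δ·f(x). -/
open Metric Filter Topology Classical

noncomputable def hoferSeq {X : Type*} [MetricSpace X] (f : X → ℝ) (x : X) (δ : ℝ) : ℕ → X
  | 0 => x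
  | k+1 => if h : ∃ y ∈ Metric.ball (hoferSeq f x δ k) (δ / 2 ^ k),
      2 * f (hoferSeq f x δ k) < f y then h.choose else hoferSeq f x δ k

lemma hoferSeq_step {X : Type*} [MetricSpace X] (f : X → ℝ) (x : X) (δ : ℝ) (k : ℕ)
    (h : ∃ y ∈ Metric.ball (hoferSeq f x δ k) (δ / 2 ^ k), 2 * f (hoferSeq f x δ k) < f y) :
    hoferSeq f x δ (k+1) ∈ Metric.ball (hoferSeq f x δ k) (δ / 2 ^ k) ∧
      2 * f (hoferSeq f x δ k) < f (hoferSeq f x δ (k+1)) := by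
  have : hoferSeq f x δ (k+1) = h.choose := by
    rw [hoferSeq, dif_pos h]
  rw [this]
  exact h.choose_spec

lemma hoferSeq_step_not {X : Type*} [MetricSpace X] (f : X → ℝ) (x : X) (δ : ℝ) (k : ℕ)
    (h : ¬ ∃ y ∈ Metric.ball (hoferSeq f x δ k) (δ / 2 ^ k), 2 * f (hoferSeq f x δ k) < f y) :
    hoferSeq f x δ (k+1) = hoferSeq f x δ k := by
  rw [hoferSeq, dif_neg h]

/-- Hofer's lemma (Lemma A.7 of the paper). -/
theorem stmt9 {X : Type*} [MetricSpace X] (f : X → ℝ) (hf : Continuous f)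
    (hnn : ∀ y, 0 ≤ f y) (x : X) (δ : ℝ) (hδ : 0 < δ)
    (hcomp : IsComplete (Metric.closedBall x (2 * δ))) :
    ∃ ξ : X, ∃ ε : ℝ, 0 < ε ∧ ε ≤ δ ∧ dist x ξ < 2 * δ ∧
      (∀ y ∈ Metric.ball ξ ε, f y ≤ 2 * f ξ) ∧ δ * f x ≤ ε * f ξ := by
  classical
  set g := hoferSeq f x δ with hg
  have hg0 : g 0 = x := rfl
  have hdiststep : ∀ k, dist (g k) (g (k+1)) ≤ δ / 2 ^ k := by
    intro k
    by_cases h : ∃ y ∈ ball (g k) (δ / 2 ^ k), 2 * f (g k) < f y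
    · have := (hoferSeq_step f x δ k h).1
      rw [mem_ball] at this
      rw [dist_comm]
      exact this.le
    · rw [show g (k+1) = g k from hoferSeq_step_not f x δ k h]
      simp only [dist_self]
      positivity
  have hdist : ∀ k, dist x (g k) ≤ 2 * δ - 2 * δ / 2 ^ k := by
    intro k
    induction k with
    | zero => simp [hg0]
    | succ k ih =>
      calc dist x (g (k+1)) ≤ dist x (g k) + dist (g k) (g (k+1)) := dist_triangle _ _ _
        _ ≤ (2 * δ - 2 * δ / 2 ^ k) + δ / 2 ^ k := add_le_add ih (hdiststep k)
        _ = 2 * δ - 2 * δ / 2 ^ (k+1) := by ring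
  have hdistlt : ∀ k, dist x (g k) < 2 * δ := fun k =>
    lt_of_le_of_lt (hdist k) (sub_lt_self _ (by positivity))
  by_cases hall : ∀ k, ∃ y ∈ ball (g k) (δ / 2 ^ k), 2 * f (g k) < f y
  · exfalso
    have hc : CauchySeq g := cauchySeq_of_le_geometric (1/2) δ (by norm_num)
      (fun n => by rw [div_pow, one_pow, mul_one_div]; exact hdiststep n)
    have hmem : ∀ k, g k ∈ Metric.closedBall x (2 * δ) := by
      intro k
      rw [mem_closedBall, dist_comm]
      exact (hdistlt k).le
    obtain ⟨l, _, hlt⟩ := cauchySeq_tendsto_of_isComplete hcomp hmem hc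
    have hpos : 0 < f (g 1) := by
      have h2 := (hoferSeq_step f x δ 0 (hall 0)).2
      have := hnn (g 0)
      linarith
    have hgrow : ∀ k, 2 ^ k * f (g 1) ≤ f (g (k+1)) := by
      intro k
      induction k with
      | zero => simp
      | succ k ih =>
        have h2 := (hoferSeq_step f x δ (k+1) (hall (k+1))).2
        calc 2 ^ (k+1) * f (g 1) = 2 * (2 ^ k * f (g 1)) := by ring
          _ ≤ 2 * f (g (k+1)) := by linarith
          _ ≤ f (g (k+2)) := h2.le
    have htop : Tendsto (fun k => f (g (k+1))) atTop atTop :=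
      tendsto_atTop_mono hgrow
        ((tendsto_pow_atTop_atTop_of_one_lt (by norm_num : (1:ℝ) < 2)).atTop_mul_const hpos)
    have hnhds : Tendsto (fun k => f (g (k+1))) atTop (𝓝 (f l)) :=
      ((hf.tendsto l).comp hlt).comp (tendsto_add_atTop_nat 1)
    exact not_tendsto_atTop_of_tendsto_nhds hnhds htop
  · push_neg at hall
    have hex : ∃ k, ∀ y ∈ ball (g k) (δ / 2 ^ k), f y ≤ 2 * f (g k) := hall
    set k := Nat.find hex with hkdef
    have hk : ∀ y ∈ ball (g k) (δ / 2 ^ k), f y ≤ 2 * f (g k) := Nat.find_spec hex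
    have hfle : ∀ j, j ≤ k → 2 ^ j * f x ≤ f (g j) := by
      intro j hj
      induction j with
      | zero => simp [hg0]
      | succ j ih =>
        have hjk : j < k := lt_of_lt_of_le (Nat.lt_succ_self j) hj
        have hbad : ∃ y ∈ ball (g j) (δ / 2 ^ j), 2 * f (g j) < f y := by
          have hmin := Nat.find_min hex hjk
          push_neg at hmin
          exact hmin
        have h2 := (hoferSeq_step f x δ j hbad).2
        have hih := ih hjk.le
        calc 2 ^ (j+1) * f x = 2 * (2 ^ j * f x) := by ring
          _ ≤ 2 * f (g j) := by linarith
          _ ≤ f (g (j+1)) := h2.le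
    have h2k : (0:ℝ) < 2 ^ k := by positivity
    refine ⟨g k, δ / 2 ^ k, by positivity, ?_, hdistlt k, hk, ?_⟩
    · exact div_le_self hδ.le (one_le_pow₀ one_le_two)
    · have hkk := hfle k le_rfl
      calc δ * f x = δ / 2 ^ k * (2 ^ k * f x) := by field_simp
        _ ≤ δ / 2 ^ k * f (g k) := by
            apply mul_le_mul_of_nonneg_left hkk
            positivity
end

section
/- Let W : ℂⁿ → ℂ be holomorphic, and let G(z) denote the real gradient of Re W at z (so Re⟨G(z), v⟩ = Re(DW(z)v) for all v). Let v : ℝ × ℝ → ℂⁿ be a smooth map, 2π-periodic in the second variable t, satisfying the negative gradient flow equation ∂_s v + i·∂_t v + 2·G(v) = 0. Assume there exist κ₋, κ₊ ∈ ℂⁿ such that v(s,·) → κ± in C¹ uniformly as s → ±∞, and that ∫_{ℝ×[0,2π]} |G(v)|² ds dt < ∞. Then ∫_{ℝ×[0,2π]} |G(v(s,t))|² ds dt = π·Re(W(κ₋) − W(κ₊)). -/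
open MeasureTheory Set Filter

set_option maxHeartbeats 1000000 in
/-- Soliton energy identity (equation 6.3 of the paper, flat target): for a finite-energy
solution of `∂_s v + i∂_t v + 2∇(Re W)(v) = 0` on the cylinder with `C¹`-uniform asymptotic
limits `κ±`, the total potential energy equals `π·Re(W(κ₋) − W(κ₊))`. -/
theorem stmt13 (n : ℕ) (W : EuclideanSpace ℂ (Fin n) → ℂ) (hW : Differentiable ℂ W)
    (G : EuclideanSpace ℂ (Fin n) → EuclideanSpace ℂ (Fin n))
    (hG : ∀ z w, (inner ℂ (G z) w : ℂ).re = (fderiv ℂ W z w).re)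
    (v : ℝ × ℝ → EuclideanSpace ℂ (Fin n)) (hv : ContDiff ℝ (⊤ : ℕ∞) v)
    (hper : ∀ s t : ℝ, v (s, t + 2 * Real.pi) = v (s, t))
    (heq : ∀ p : ℝ × ℝ,
      fderiv ℝ v p (1, 0) + Complex.I • fderiv ℝ v p (0, 1) + (2 : ℝ) • G (v p) = 0)
    (κm κp : EuclideanSpace ℂ (Fin n))
    (hlimp : ∀ ε > 0, ∃ S : ℝ, ∀ s ≥ S, ∀ t : ℝ,
      ‖v (s, t) - κp‖ < ε ∧ ‖fderiv ℝ v (s, t) (0, 1)‖ < ε)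
    (hlimm : ∀ ε > 0, ∃ S : ℝ, ∀ s ≤ S, ∀ t : ℝ,
      ‖v (s, t) - κm‖ < ε ∧ ‖fderiv ℝ v (s, t) (0, 1)‖ < ε)
    (hfin : IntegrableOn (fun p : ℝ × ℝ => ‖G (v p)‖ ^ 2)
      (Set.univ ×ˢ Set.Icc (0:ℝ) (2 * Real.pi))) :
    (∫ p in Set.univ ×ˢ Set.Icc (0:ℝ) (2 * Real.pi), ‖G (v p)‖ ^ 2)
      = Real.pi * (W κm - W κp).re := by
  have hvd : Differentiable ℝ v := hv.differentiable (by simp)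
  have hfc : Continuous (fderiv ℝ v) := hv.continuous_fderiv (by simp)
  have hds_c : Continuous (fun p : ℝ × ℝ => fderiv ℝ v p (1, 0)) :=
    hfc.clm_apply continuous_const
  have hdt_c : Continuous (fun p : ℝ × ℝ => fderiv ℝ v p (0, 1)) :=
    hfc.clm_apply continuous_const
  -- G ∘ v expressed via derivatives of v
  have hGv : ∀ p : ℝ × ℝ, G (v p)
      = -((2⁻¹ : ℝ) • (fderiv ℝ v p (1, 0) + Complex.I • fderiv ℝ v p (0, 1))) := by
    intro p
    have h1 := heq p
    have h2 : -(fderiv ℝ v p (1, 0) + Complex.I • fderiv ℝ v p (0, 1)) = (2 : ℝ) • G (v p) := by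
      rw [← add_eq_zero_iff_neg_eq]; exact h1
    calc G (v p) = (2⁻¹ : ℝ) • ((2 : ℝ) • G (v p)) := by
          rw [smul_smul]; norm_num
      _ = -((2⁻¹ : ℝ) • (fderiv ℝ v p (1, 0) + Complex.I • fderiv ℝ v p (0, 1))) := by
          rw [← h2, smul_neg]
  have hGvc : Continuous (fun p : ℝ × ℝ => G (v p)) := by
    have : (fun p : ℝ × ℝ => G (v p))
        = fun p => -((2⁻¹ : ℝ) • (fderiv ℝ v p (1, 0) + Complex.I • fderiv ℝ v p (0, 1))) :=
      funext hGv
    rw [this]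
    exact ((hds_c.add (hdt_c.const_smul Complex.I)).const_smul (2⁻¹ : ℝ)).neg
  -- partial derivatives
  have hds : ∀ p : ℝ × ℝ, HasDerivAt (fun s => v (s, p.2)) (fderiv ℝ v p (1, 0)) p.1 := by
    intro p
    have h1 : HasDerivAt (fun s : ℝ => (s, p.2)) ((1 : ℝ), (0 : ℝ)) p.1 :=
      (hasDerivAt_id _).prodMk (hasDerivAt_const _ _)
    exact (hvd (p.1, p.2)).hasFDerivAt.comp_hasDerivAt p.1 h1
  have hdt : ∀ p : ℝ × ℝ, HasDerivAt (fun t => v (p.1, t)) (fderiv ℝ v p (0, 1)) p.2 := by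
    intro p
    have h1 : HasDerivAt (fun t : ℝ => (p.1, t)) ((0 : ℝ), (1 : ℝ)) p.2 :=
      (hasDerivAt_const _ _).prodMk (hasDerivAt_id _)
    exact (hvd (p.1, p.2)).hasFDerivAt.comp_hasDerivAt p.2 h1
  have hWf : ∀ z, HasFDerivAt W ((fderiv ℂ W z).restrictScalars ℝ) z :=
    fun z => ((hW z).hasFDerivAt).restrictScalars ℝ
  -- s-derivative of Re (W ∘ v)
  have hWs : ∀ p : ℝ × ℝ, HasDerivAt (fun s => (W (v (s, p.2))).re)
      ((inner ℂ (G (v p)) (fderiv ℝ v p (1, 0)) : ℂ).re) p.1 := by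
    intro p
    have h1 := (hWf (v p)).comp_hasDerivAt p.1 (hds p)
    have h2 := Complex.reCLM.hasFDerivAt.comp_hasDerivAt p.1 h1
    rw [hG]
    exact h2
  -- im identity
  have him : ∀ z w, (fderiv ℂ W z w).im = -((inner ℂ (G z) (Complex.I • w) : ℂ).re) := by
    intro z w
    have h := hG z (Complex.I • w)
    rw [ContinuousLinearMap.map_smul, smul_eq_mul, Complex.mul_re, Complex.I_re,
      Complex.I_im] at h
    linarith
  -- t-derivative of Im (W ∘ v)
  have hWt : ∀ p : ℝ × ℝ, HasDerivAt (fun t => (W (v (p.1, t))).im)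
      (-((inner ℂ (G (v p)) (Complex.I • fderiv ℝ v p (0, 1)) : ℂ).re)) p.2 := by
    intro p
    have h1 := (hWf (v p)).comp_hasDerivAt p.2 (hdt p)
    have h2 := Complex.imCLM.hasFDerivAt.comp_hasDerivAt p.2 h1
    rw [← him]
    exact h2
  -- key pointwise identity
  have hkey : ∀ p : ℝ × ℝ, (inner ℂ (G (v p)) (fderiv ℝ v p (1, 0)) : ℂ).re
      = -((inner ℂ (G (v p)) (Complex.I • fderiv ℝ v p (0, 1)) : ℂ).re) + (-2) * ‖G (v p)‖ ^ 2 := by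
    intro p
    have h1 : fderiv ℝ v p (1, 0)
        = -(Complex.I • fderiv ℝ v p (0, 1)) + -((2 : ℂ) • G (v p)) := by
      have h := heq p
      have h2 : ((2 : ℝ) : ℂ) • G (v p) = (2 : ℝ) • G (v p) := Complex.coe_smul 2 (G (v p))
      have h3 : ((2 : ℝ) : ℂ) = (2 : ℂ) := by norm_num
      rw [h3] at h2
      rw [h2]
      have := congrArg (fun x => x - (Complex.I • fderiv ℝ v p (0, 1) + (2 : ℝ) • G (v p))) h
      simp at this
      rw [this]; abel
    have hsq : (inner ℂ (G (v p)) (G (v p)) : ℂ).re = ‖G (v p)‖ ^ 2 := by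
      have := inner_self_eq_norm_sq (𝕜 := ℂ) (G (v p))
      simpa using this
    rw [h1, inner_add_right, inner_neg_right, inner_neg_right, inner_smul_right,
      inner_smul_right, Complex.add_re, Complex.neg_re, Complex.neg_re, Complex.mul_re,
      Complex.mul_re]
    simp only [Complex.re_ofNat, Complex.im_ofNat, Complex.I_re, Complex.I_im, zero_mul,
      sub_zero, hsq]
    ring
  -- the functions f and g
  set f : ℝ → ℝ := fun s => ∫ t in (0:ℝ)..(2*Real.pi), (W (v (s, t))).re with hf_def
  set g : ℝ → ℝ := fun s => ∫ t in (0:ℝ)..(2*Real.pi), ‖G (v (s, t))‖ ^ 2 with hg_def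
  have hWc : Continuous W := hW.continuous
  have hvc : Continuous v := hv.continuous
  have hF'_cont : Continuous (fun p : ℝ × ℝ => (inner ℂ (G (v p)) (fderiv ℝ v p (1, 0)) : ℂ).re) :=
    Complex.continuous_re.comp (hGvc.inner hds_c)
  have hGsq_cont : Continuous (fun p : ℝ × ℝ => ‖G (v p)‖ ^ 2) := hGvc.norm.pow 2
  have hIm_cont : Continuous (fun p : ℝ × ℝ =>
      -((inner ℂ (G (v p)) (Complex.I • fderiv ℝ v p (0, 1)) : ℂ).re)) :=
    (Complex.continuous_re.comp (hGvc.inner (hdt_c.const_smul Complex.I))).neg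
  have hRe_cont : ∀ s : ℝ, Continuous (fun t => (W (v (s, t))).re) := fun s =>
    Complex.continuous_re.comp (hWc.comp (hvc.comp (Continuous.prodMk_right s)))
  -- FTC in t : the imaginary-part term integrates to zero
  have him_int : ∀ s : ℝ, (∫ t in (0:ℝ)..(2*Real.pi),
      -((inner ℂ (G (v (s, t))) (Complex.I • fderiv ℝ v (s, t) (0, 1)) : ℂ).re)) = 0 := by
    intro s
    have hInt : IntervalIntegrable (fun t =>
        -((inner ℂ (G (v (s, t))) (Complex.I • fderiv ℝ v (s, t) (0, 1)) : ℂ).re))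
        volume 0 (2*Real.pi) :=
      (hIm_cont.comp (Continuous.prodMk_right s)).intervalIntegrable _ _
    rw [intervalIntegral.integral_eq_sub_of_hasDerivAt (f := fun t => (W (v (s, t))).im)
      (fun t _ => hWt (s, t)) hInt]
    have h0 := hper s 0
    rw [zero_add] at h0
    rw [h0, sub_self]
  have hgint_cont : ∀ s : ℝ, IntervalIntegrable (fun t => ‖G (v (s, t))‖ ^ 2)
      volume 0 (2*Real.pi) :=
    fun s => (hGsq_cont.comp (Continuous.prodMk_right s)).intervalIntegrable _ _
  have hF'_eq : ∀ s : ℝ, (∫ t in (0:ℝ)..(2*Real.pi),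
      (inner ℂ (G (v (s, t))) (fderiv ℝ v (s, t) (1, 0)) : ℂ).re) = (-2) * g s := by
    intro s
    have hInt1 : IntervalIntegrable (fun t =>
        -((inner ℂ (G (v (s, t))) (Complex.I • fderiv ℝ v (s, t) (0, 1)) : ℂ).re))
        volume 0 (2*Real.pi) :=
      (hIm_cont.comp (Continuous.prodMk_right s)).intervalIntegrable _ _
    rw [intervalIntegral.integral_congr
      (g := fun t => -((inner ℂ (G (v (s, t))) (Complex.I • fderiv ℝ v (s, t) (0, 1)) : ℂ).re)
        + (-2) * ‖G (v (s, t))‖ ^ 2) (fun t _ => hkey (s, t))]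
    rw [intervalIntegral.integral_add hInt1 ((hgint_cont s).const_mul (-2))]
    rw [him_int s, zero_add, intervalIntegral.integral_const_mul]
  -- derivative of f
  have hf_deriv : ∀ s₀ : ℝ, HasDerivAt f ((-2) * g s₀) s₀ := by
    intro s₀
    obtain ⟨C, hC⟩ := ((isCompact_Icc (a := s₀ - 1) (b := s₀ + 1)).prod
      (isCompact_uIcc (a := (0:ℝ)) (b := 2*Real.pi))).exists_bound_of_continuousOn
      hF'_cont.continuousOn
    have hmeas : ∀ᶠ x in nhds s₀, AEStronglyMeasurable (fun t => (W (v (x, t))).re)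
        (volume.restrict (Set.uIoc (0:ℝ) (2*Real.pi))) :=
      Eventually.of_forall fun x => (hRe_cont x).aestronglyMeasurable
    have hint : IntervalIntegrable (fun t => (W (v (s₀, t))).re) volume 0 (2*Real.pi) :=
      (hRe_cont s₀).intervalIntegrable _ _
    have hmeas' : AEStronglyMeasurable
        (fun t => (inner ℂ (G (v (s₀, t))) (fderiv ℝ v (s₀, t) (1, 0)) : ℂ).re)
        (volume.restrict (Set.uIoc (0:ℝ) (2*Real.pi))) :=
      (hF'_cont.comp (Continuous.prodMk_right s₀)).aestronglyMeasurable
    have hbound : ∀ᵐ t ∂(volume : Measure ℝ), t ∈ Set.uIoc (0:ℝ) (2*Real.pi) →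
        ∀ x ∈ Metric.ball s₀ 1,
        ‖(inner ℂ (G (v (x, t))) (fderiv ℝ v (x, t) (1, 0)) : ℂ).re‖ ≤ C := by
      refine Eventually.of_forall fun t ht x hx => ?_
      have hx' : |x - s₀| < 1 := by rwa [Metric.mem_ball, Real.dist_eq] at hx
      exact hC (x, t) ⟨⟨by linarith [(abs_lt.mp hx').1], by linarith [(abs_lt.mp hx').2]⟩,
        Set.uIoc_subset_uIcc ht⟩
    have hdiff : ∀ᵐ t ∂(volume : Measure ℝ), t ∈ Set.uIoc (0:ℝ) (2*Real.pi) →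
        ∀ x ∈ Metric.ball s₀ 1, HasDerivAt (fun x => (W (v (x, t))).re)
          ((inner ℂ (G (v (x, t))) (fderiv ℝ v (x, t) (1, 0)) : ℂ).re) x :=
      Eventually.of_forall fun t _ x _ => hWs (x, t)
    have key := (intervalIntegral.hasDerivAt_integral_of_dominated_loc_of_deriv_le
      (F := fun x t => (W (v (x, t))).re)
      (F' := fun x t => (inner ℂ (G (v (x, t))) (fderiv ℝ v (x, t) (1, 0)) : ℂ).re)
      (bound := fun _ => C) (Metric.ball_mem_nhds s₀ one_pos) hmeas hint hmeas' hbound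
      intervalIntegrable_const hdiff).2
    rw [hF'_eq s₀] at key
    exact key
  -- limits of f at ±∞
  have pi_lt : 2 * Real.pi < 7 := by nlinarith [Real.pi_lt_d2]
  have hdist_bound : ∀ (κ : EuclideanSpace ℂ (Fin n)) (s : ℝ) (ε : ℝ), 0 < ε →
      (∀ t : ℝ, dist (W (v (s, t))) (W κ) < ε / 7) →
      dist (f s) (2*Real.pi * (W κ).re) < ε := by
    intro κ s ε hε hclose
    have hb : ∀ t ∈ Set.uIoc (0:ℝ) (2*Real.pi), ‖(W (v (s, t))).re - (W κ).re‖ ≤ ε/7 := by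
      intro t _
      have h2 := hclose t
      have h3 : |(W (v (s, t))).re - (W κ).re| ≤ dist (W (v (s, t))) (W κ) := by
        rw [Complex.dist_eq]
        calc |(W (v (s, t))).re - (W κ).re| = |((W (v (s, t))) - W κ).re| := by
              rw [Complex.sub_re]
          _ ≤ ‖W (v (s, t)) - W κ‖ := Complex.abs_re_le_norm _
      rw [Real.norm_eq_abs]; linarith
    have hf_sub : f s - 2*Real.pi * (W κ).re
        = ∫ t in (0:ℝ)..(2*Real.pi), ((W (v (s, t))).re - (W κ).re) := by
      rw [intervalIntegral.integral_sub ((hRe_cont s).intervalIntegrable _ _)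
        intervalIntegrable_const, intervalIntegral.integral_const]
      simp only [hf_def, smul_eq_mul, sub_zero]
    have hbnd := intervalIntegral.norm_integral_le_of_norm_le_const hb
    rw [Real.dist_eq, hf_sub]
    have habs : |2*Real.pi - 0| = 2*Real.pi := by
      rw [sub_zero]; exact abs_of_nonneg (by positivity)
    rw [Real.norm_eq_abs, habs] at hbnd
    calc |∫ t in (0:ℝ)..(2*Real.pi), ((W (v (s, t))).re - (W κ).re)| ≤ ε/7 * (2*Real.pi) :=
          hbnd
      _ < ε := by nlinarith [Real.pi_pos]
  have htop : Tendsto f atTop (nhds (2*Real.pi * (W κp).re)) := by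
    rw [Metric.tendsto_atTop]
    intro ε hε
    obtain ⟨δ, hδpos, hδ⟩ := Metric.continuousAt_iff.mp (hWc.continuousAt (x := κp))
      (ε/7) (by positivity)
    obtain ⟨S, hS⟩ := hlimp δ hδpos
    exact ⟨S, fun s hs => hdist_bound κp s ε hε fun t =>
      hδ (by rw [dist_eq_norm]; exact (hS s hs t).1)⟩
  have hbot : Tendsto f atBot (nhds (2*Real.pi * (W κm).re)) := by
    rw [atBot_basis.tendsto_iff Metric.nhds_basis_ball]
    intro ε hε
    obtain ⟨δ, hδpos, hδ⟩ := Metric.continuousAt_iff.mp (hWc.continuousAt (x := κm))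
      (ε/7) (by positivity)
    obtain ⟨S, hS⟩ := hlimm δ hδpos
    refine ⟨S, trivial, fun s hs => ?_⟩
    exact Metric.mem_ball.mpr (hdist_bound κm s ε hε fun t =>
      hδ (by rw [dist_eq_norm]; exact (hS s (mem_Iic.mp hs) t).1))
  -- integrability of g
  have hmeq : (volume : Measure ℝ).prod (volume.restrict (Set.Icc (0:ℝ) (2*Real.pi)))
      = (volume : Measure (ℝ × ℝ)).restrict (Set.univ ×ˢ Set.Icc (0:ℝ) (2*Real.pi)) := by
    rw [Measure.volume_eq_prod, ← Measure.prod_restrict, Measure.restrict_univ]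
  have hfin2 : Integrable (fun p : ℝ × ℝ => ‖G (v p)‖ ^ 2)
      ((volume : Measure ℝ).prod (volume.restrict (Set.Icc (0:ℝ) (2*Real.pi)))) := by
    rw [hmeq]; exact hfin
  have hgof : ∀ s : ℝ,
      (∫ t, ‖G (v (s, t))‖ ^ 2 ∂(volume.restrict (Set.Icc (0:ℝ) (2*Real.pi)))) = g s := by
    intro s
    rw [MeasureTheory.integral_Icc_eq_integral_Ioc]
    exact (intervalIntegral.integral_of_le (by positivity)).symm
  have hgint : Integrable g := by
    have h1 := hfin2.integral_prod_left
    exact h1.congr (Eventually.of_forall fun s => hgof s)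
  -- whole-line FTC
  have hFTC := integral_of_hasDerivAt_of_tendsto hf_deriv (hgint.const_mul (-2)) hbot htop
  rw [MeasureTheory.integral_const_mul] at hFTC
  -- Fubini for the left-hand side
  have hLHS : (∫ p in Set.univ ×ˢ Set.Icc (0:ℝ) (2 * Real.pi), ‖G (v p)‖ ^ 2) = ∫ s, g s := by
    rw [← hmeq, MeasureTheory.integral_prod _ hfin2]
    exact integral_congr_ae (Eventually.of_forall fun s => hgof s)
  rw [hLHS, Complex.sub_re]
  linear_combination (-1/2 : ℝ) * hFTC
end

section
/- Let W : ℂⁿ → ℂ be holomorphic with real-gradient G as above, and let v : ℝ × ℝ → ℂⁿ be a smooth 2π-periodic-in-t finite-energy solution of ∂_s v + i·∂_t v + 2·G(v) = 0 with C¹-uniform limits κ± at s → ±∞. Then Im W(κ₋) = Im W(κ₊). -/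
open MeasureTheory Complex

noncomputable def phiAux (n : ℕ) (W : EuclideanSpace ℂ (Fin n) → ℂ)
    (q : EuclideanSpace ℂ (Fin n) × EuclideanSpace ℂ (Fin n)) : ℂ :=
  (2 * (Real.pi : ℂ) * Complex.I)⁻¹ * ∫ θ in (0:ℝ)..(2 * Real.pi),
    deriv (circleMap 0 1) θ * ((circleMap 0 1 θ) ^ (-2 : ℤ) *
      W (q.1 + circleMap 0 1 θ • q.2))

lemma phiAux_eq (n : ℕ) (W : EuclideanSpace ℂ (Fin n) → ℂ) (hW : Differentiable ℂ W)
    (z w : EuclideanSpace ℂ (Fin n)) : fderiv ℂ W z w = phiAux n W (z, w) := by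
  set f : ℂ → ℂ := fun ζ => W (z + ζ • w) with hf
  have hfd : Differentiable ℂ f := hW.comp ((differentiable_id.smul_const w).const_add z)
  have hder : HasDerivAt f (fderiv ℂ W z w) 0 := by
    have h1 : HasDerivAt (fun ζ : ℂ => z + ζ • w) w 0 := by
      simpa using ((hasDerivAt_id (0:ℂ)).smul_const w).const_add z
    have h2 : HasFDerivAt W (fderiv ℂ W z) ((fun ζ : ℂ => z + ζ • w) 0) := by
      simpa using (hW z).hasFDerivAt
    exact h2.comp_hasDerivAt 0 h1
  have h3 : deriv f 0 = (2 * (Real.pi : ℂ) * Complex.I)⁻¹ •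
      ∮ ζ in C(0, 1), (ζ - 0) ^ (-2 : ℤ) • f ζ := by
    have h3' := (hfd.diffContOnCl (s := Metric.ball 0 1)).deriv_eq_smul_circleIntegral one_pos
    have hcongr : (∮ ζ in C(0, 1), (ζ - 0) ^ (-2 : ℤ) • f ζ)
        = ∮ ζ in C(0, 1), (1 / (ζ - 0) ^ 2) • f ζ := by
      congr 1; funext ζ; simp [zpow_neg]
    rw [hcongr, h3', smul_smul, inv_mul_cancel₀ Complex.two_pi_I_ne_zero, one_smul]
  rw [hder.deriv] at h3
  rw [h3, circleIntegral]
  simp only [phiAux, smul_eq_mul, sub_zero, hf]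

lemma phiAux_cont (n : ℕ) (W : EuclideanSpace ℂ (Fin n) → ℂ) (hWc : Continuous W) :
    Continuous (phiAux n W) := by
  have h2π : (0:ℝ) ≤ 2 * Real.pi := by positivity
  set F : (EuclideanSpace ℂ (Fin n) × EuclideanSpace ℂ (Fin n)) → ℝ → ℂ := fun q θ =>
    deriv (circleMap 0 1) θ * ((circleMap 0 1 θ) ^ (-2 : ℤ) *
      W (q.1 + circleMap 0 1 θ • q.2)) with hF
  have hFc : Continuous (Function.uncurry F) := by
    have hc : Continuous fun x : (EuclideanSpace ℂ (Fin n) × EuclideanSpace ℂ (Fin n)) × ℝ =>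
        circleMap 0 1 x.2 := (continuous_circleMap 0 1).comp continuous_snd
    have h0 : ∀ x : (EuclideanSpace ℂ (Fin n) × EuclideanSpace ℂ (Fin n)) × ℝ,
        circleMap 0 1 x.2 ≠ 0 ∨ (0:ℤ) ≤ (-2 : ℤ) :=
      fun x => Or.inl (by simpa using circleMap_ne_center (R := 1) one_ne_zero (θ := x.2))
    have hderiv : Continuous fun x : (EuclideanSpace ℂ (Fin n) × EuclideanSpace ℂ (Fin n)) × ℝ =>
        deriv (circleMap 0 1) x.2 := by
      simp only [deriv_circleMap]; exact hc.mul continuous_const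
    exact hderiv.mul ((hc.zpow₀ (-2) h0).mul
      (hWc.comp (continuous_fst.fst.add (hc.smul continuous_fst.snd))))
  have hrw : (fun q => ∫ θ in (0:ℝ)..(2 * Real.pi), F q θ)
      = fun q => ∫ θ in Set.Icc (0:ℝ) (2 * Real.pi), F q θ := by
    funext q
    rw [intervalIntegral.integral_of_le h2π, ← integral_Icc_eq_integral_Ioc]
  have := continuous_parametric_integral_of_continuous (μ := (volume : Measure ℝ)) hFc (isCompact_Icc (a := (0:ℝ)) (b := 2 * Real.pi))
  have h2 : Continuous fun q => ∫ θ in (0:ℝ)..(2 * Real.pi), F q θ := hrw ▸ this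
  exact continuous_const.mul h2

/-- Section 6 of the paper: a finite-energy soliton connecting `κ₋` to `κ₊` forces
`Im W(κ₋) = Im W(κ₊)`. -/
theorem stmt14 (n : ℕ) (W : EuclideanSpace ℂ (Fin n) → ℂ) (hW : Differentiable ℂ W)
    (G : EuclideanSpace ℂ (Fin n) → EuclideanSpace ℂ (Fin n))
    (hG : ∀ z w, (inner ℂ (G z) w : ℂ).re = (fderiv ℂ W z w).re)
    (v : ℝ × ℝ → EuclideanSpace ℂ (Fin n)) (hv : ContDiff ℝ (⊤ : ℕ∞) v)
    (hper : ∀ s t : ℝ, v (s, t + 2 * Real.pi) = v (s, t))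
    (heq : ∀ p : ℝ × ℝ,
      fderiv ℝ v p (1, 0) + Complex.I • fderiv ℝ v p (0, 1) + (2 : ℝ) • G (v p) = 0)
    (κm κp : EuclideanSpace ℂ (Fin n))
    (hlimp : ∀ ε > 0, ∃ S : ℝ, ∀ s ≥ S, ∀ t : ℝ,
      ‖v (s, t) - κp‖ < ε ∧ ‖fderiv ℝ v (s, t) (0, 1)‖ < ε)
    (hlimm : ∀ ε > 0, ∃ S : ℝ, ∀ s ≤ S, ∀ t : ℝ,
      ‖v (s, t) - κm‖ < ε ∧ ‖fderiv ℝ v (s, t) (0, 1)‖ < ε)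
    (hfin : IntegrableOn (fun p : ℝ × ℝ => ‖G (v p)‖ ^ 2)
      (Set.univ ×ˢ Set.Icc (0:ℝ) (2 * Real.pi))) :
    (W κm).im = (W κp).im := by
  have twopi_pos : (0:ℝ) < 2 * Real.pi := by positivity
  -- Step 1: the full inner product identity
  have hinner : ∀ z w, (inner ℂ (G z) w : ℂ) = fderiv ℂ W z w := by
    intro z w
    have h1 := hG z w
    have h2 := hG z (Complex.I • w)
    rw [inner_smul_right] at h2
    have h3 : fderiv ℂ W z (Complex.I • w) = Complex.I * fderiv ℂ W z w := by
      rw [(fderiv ℂ W z).map_smul, smul_eq_mul]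
    rw [h3] at h2
    simp only [Complex.mul_re, Complex.I_re, Complex.I_im, zero_mul, one_mul, zero_sub,
      neg_inj] at h2
    exact Complex.ext h1 h2
  -- Step 2: continuity of the derivative via the circle-integral representation
  have hΦeq : ∀ z w, fderiv ℂ W z w = phiAux n W (z, w) := phiAux_eq n W hW
  have hΦc : Continuous (phiAux n W) := phiAux_cont n W hW.continuous
  -- basic differentiability facts
  have hvd : ∀ p, HasFDerivAt v (fderiv ℝ v p) p := fun p =>
    (hv.differentiable (by simp) p).hasFDerivAt
  have hWv : ∀ p : ℝ × ℝ, HasFDerivAt (fun q => W (v q))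
      (((fderiv ℂ W (v p)).restrictScalars ℝ).comp (fderiv ℝ v p)) p := fun p =>
    ((hW (v p)).hasFDerivAt.restrictScalars ℝ).comp p (hvd p)
  set gg : ℝ × ℝ → ℝ := fun p => (W (v p)).im with hgg
  set hh : ℝ × ℝ → ℝ := fun p => (W (v p)).re with hhh
  set b : ℝ × ℝ → EuclideanSpace ℂ (Fin n) := fun p => fderiv ℝ v p (0, 1) with hb
  have hbc : Continuous b := (hv.continuous_fderiv (by simp)).clm_apply continuous_const
  set q : ℝ × ℝ → ℝ := fun p => (phiAux n W (v p, b p)).re with hq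
  have hqc : Continuous q := Complex.continuous_re.comp (hΦc.comp (hv.continuous.prodMk hbc))
  have hggc : Continuous gg := Complex.continuous_im.comp (hW.continuous.comp hv.continuous)
  -- key pointwise identity: Im dW(∂_s v) = -Re dW(∂_t v)
  have key : ∀ p : ℝ × ℝ, (fderiv ℂ W (v p) (fderiv ℝ v p (1, 0))).im = -(q p) := by
    intro p
    have he := heq p
    have ha' : fderiv ℝ v p (1, 0) = -(Complex.I • b p + (2:ℝ) • G (v p)) := by
      have h' : fderiv ℝ v p (1, 0) + (Complex.I • b p + (2:ℝ) • G (v p)) = 0 := by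
        simp only [hb]; rw [← add_assoc]; exact he
      exact eq_neg_of_add_eq_zero_left h'
    have hGG : fderiv ℂ W (v p) (G (v p)) = (inner ℂ (G (v p)) (G (v p)) : ℂ) :=
      (hinner (v p) (G (v p))).symm
    have hlin : fderiv ℂ W (v p) (fderiv ℝ v p (1, 0))
        = -(Complex.I * fderiv ℂ W (v p) (b p) + (2:ℝ) • (inner ℂ (G (v p)) (G (v p)) : ℂ)) := by
      rw [ha', map_neg, map_add, (fderiv ℂ W (v p)).map_smul, smul_eq_mul,
        (fderiv ℂ W (v p)).map_smul_of_tower, hGG]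
    have him : (inner ℂ (G (v p)) (G (v p)) : ℂ).im = 0 := by
      rw [inner_self_eq_norm_sq_to_K]
      simp [pow_two]
    have h2im : ((2:ℝ) • (inner ℂ (G (v p)) (G (v p)) : ℂ)).im = 0 := by
      rw [Complex.smul_im, him, smul_zero]
    have hqp : q p = (fderiv ℂ W (v p) (b p)).re := by
      have : q p = (phiAux n W (v p, b p)).re := rfl
      rw [this, ← hΦeq]
    rw [hlin, Complex.neg_im, Complex.add_im, h2im, add_zero, Complex.mul_im, Complex.I_re,
      Complex.I_im, zero_mul, one_mul, zero_add, hqp]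
  -- derivative of gg in s, and of hh in t
  have hgs : ∀ p : ℝ × ℝ, HasDerivAt (fun s' => gg (s', p.2)) (-(q p)) p.1 := by
    intro p
    have hline : HasDerivAt (fun s' : ℝ => (s', p.2)) ((1:ℝ), (0:ℝ)) p.1 :=
      (hasDerivAt_id p.1).prodMk (hasDerivAt_const p.1 p.2)
    have h1 : HasFDerivAt (fun q' => W (v q'))
        (((fderiv ℂ W (v p)).restrictScalars ℝ).comp (fderiv ℝ v p)) (p.1, p.2) := by
      simpa using hWv p
    have h2 := h1.comp_hasDerivAt p.1 hline
    have h3 := Complex.imCLM.hasFDerivAt.comp_hasDerivAt p.1 h2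
    have h4 : Complex.imCLM ((((fderiv ℂ W (v p)).restrictScalars ℝ).comp (fderiv ℝ v p))
        ((1:ℝ), (0:ℝ))) = -(q p) := by
      simpa using key p
    rw [h4] at h3
    exact h3
  have hht : ∀ p : ℝ × ℝ, HasDerivAt (fun t' => hh (p.1, t')) (q p) p.2 := by
    intro p
    have hline : HasDerivAt (fun t' : ℝ => (p.1, t')) ((0:ℝ), (1:ℝ)) p.2 :=
      (hasDerivAt_const p.2 p.1).prodMk (hasDerivAt_id p.2)
    have h1 : HasFDerivAt (fun q' => W (v q'))
        (((fderiv ℂ W (v p)).restrictScalars ℝ).comp (fderiv ℝ v p)) (p.1, p.2) := by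
      simpa using hWv p
    have h2 := h1.comp_hasDerivAt p.2 hline
    have h3 := Complex.reCLM.hasFDerivAt.comp_hasDerivAt p.2 h2
    have h4 : Complex.reCLM ((((fderiv ℂ W (v p)).restrictScalars ℝ).comp (fderiv ℝ v p))
        ((0:ℝ), (1:ℝ))) = q p := by
      have hqp : q p = (fderiv ℂ W (v p) (b p)).re := by
        have : q p = (phiAux n W (v p, b p)).re := rfl
        rw [this, ← hΦeq]
      rw [hqp]
      simp [hb]
    rw [h4] at h3
    exact h3
  -- the t-integral of q vanishes on each vertical line
  have key1 : ∀ s : ℝ, (∫ t in (0:ℝ)..(2 * Real.pi), q (s, t)) = 0 := by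
    intro s
    have hftc : (∫ t in (0:ℝ)..(2 * Real.pi), q (s, t))
        = hh (s, 2 * Real.pi) - hh (s, 0) := by
      apply intervalIntegral.integral_eq_sub_of_hasDerivAt
        (f := fun t => hh (s, t)) (f' := fun t => q (s, t))
      · intro t _
        exact hht (s, t)
      · exact ((hqc.comp (continuous_const.prodMk continuous_id)).intervalIntegrable 0 _)
    rw [hftc]
    have := hper s 0
    rw [zero_add] at this
    simp [hhh, this]
  -- gg integrates to the same value on every vertical line
  set f : ℝ → ℝ := fun s => ∫ t in (0:ℝ)..(2 * Real.pi), gg (s, t) with hf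
  have key2 : ∀ s₁ s₂ : ℝ, s₁ ≤ s₂ → f s₂ = f s₁ := by
    intro s₁ s₂ hle
    have hqneg : Continuous fun p : ℝ × ℝ => -(q p) := hqc.neg
    have hftc : ∀ t : ℝ, (∫ s in s₁..s₂, -(q (s, t))) = gg (s₂, t) - gg (s₁, t) := by
      intro t
      apply intervalIntegral.integral_eq_sub_of_hasDerivAt
        (f := fun s => gg (s, t)) (f' := fun s => -(q (s, t)))
      · intro s _
        exact hgs (s, t)
      · exact ((hqneg.comp (continuous_id.prodMk continuous_const)).intervalIntegrable _ _)
    have hint2 : IntervalIntegrable (fun t => gg (s₂, t)) volume 0 (2 * Real.pi) :=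
      (hggc.comp (continuous_const.prodMk continuous_id)).intervalIntegrable _ _
    have hint1 : IntervalIntegrable (fun t => gg (s₁, t)) volume 0 (2 * Real.pi) :=
      (hggc.comp (continuous_const.prodMk continuous_id)).intervalIntegrable _ _
    have hdiff : f s₂ - f s₁ = ∫ t in (0:ℝ)..(2 * Real.pi), (gg (s₂, t) - gg (s₁, t)) := by
      rw [intervalIntegral.integral_sub hint2 hint1]
    -- Fubini
    have hswap : (∫ t in Set.Ioc (0:ℝ) (2 * Real.pi), ∫ s in Set.Ioc s₁ s₂, -(q (s, t)))
        = ∫ s in Set.Ioc s₁ s₂, ∫ t in Set.Ioc (0:ℝ) (2 * Real.pi), -(q (s, t)) := by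
      apply MeasureTheory.integral_integral_swap
      have hcont : Continuous (Function.uncurry fun (t s : ℝ) => -(q (s, t))) :=
        hqneg.comp continuous_swap
      have : IntegrableOn (Function.uncurry fun (t s : ℝ) => -(q (s, t)))
          (Set.Ioc (0:ℝ) (2 * Real.pi) ×ˢ Set.Ioc s₁ s₂) volume :=
        (hcont.continuousOn.integrableOn_compact (isCompact_Icc.prod isCompact_Icc)).mono_set
          (Set.prod_mono Set.Ioc_subset_Icc_self Set.Ioc_subset_Icc_self)
      rw [IntegrableOn, Measure.volume_eq_prod, ← Measure.prod_restrict] at this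
      exact this
    have hzero : (∫ t in (0:ℝ)..(2 * Real.pi), ∫ s in s₁..s₂, -(q (s, t))) = 0 := by
      rw [intervalIntegral.integral_of_le twopi_pos.le]
      have hrw : ∀ t : ℝ, (∫ s in s₁..s₂, -(q (s, t))) = ∫ s in Set.Ioc s₁ s₂, -(q (s, t)) :=
        fun t => intervalIntegral.integral_of_le hle
      calc (∫ t in Set.Ioc (0:ℝ) (2 * Real.pi), ∫ s in s₁..s₂, -(q (s, t)))
          = ∫ t in Set.Ioc (0:ℝ) (2 * Real.pi), ∫ s in Set.Ioc s₁ s₂, -(q (s, t)) := by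
            exact setIntegral_congr_fun measurableSet_Ioc fun t _ => hrw t
        _ = ∫ s in Set.Ioc s₁ s₂, ∫ t in Set.Ioc (0:ℝ) (2 * Real.pi), -(q (s, t)) := hswap
        _ = 0 := by
            have hz : ∀ s ∈ Set.Ioc s₁ s₂,
                (∫ t in Set.Ioc (0:ℝ) (2 * Real.pi), -(q (s, t))) = 0 := by
              intro s _
              rw [← intervalIntegral.integral_of_le twopi_pos.le,
                intervalIntegral.integral_neg, key1 s, neg_zero]
            rw [setIntegral_congr_fun measurableSet_Ioc hz]
            simp
    have : f s₂ - f s₁ = 0 := by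
      rw [hdiff, show (∫ t in (0:ℝ)..(2 * Real.pi), (gg (s₂, t) - gg (s₁, t)))
        = ∫ t in (0:ℝ)..(2 * Real.pi), ∫ s in s₁..s₂, -(q (s, t)) from
        intervalIntegral.integral_congr fun t _ => (hftc t).symm]
      exact hzero
    linarith
  have hconst : ∀ s : ℝ, f s = f 0 := by
    intro s
    rcases le_total s 0 with hs | hs
    · exact (key2 s 0 hs).symm
    · exact key2 0 s hs
  -- limits at ±∞
  have hlimit : ∀ (κ : EuclideanSpace ℂ (Fin n))
      (hl : ∀ ε > 0, ∃ S : ℝ, ∀ t : ℝ, ‖v (S, t) - κ‖ < ε),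
      2 * Real.pi * (W κ).im = f 0 := by
    intro κ hl
    by_contra hne
    set ε := |2 * Real.pi * (W κ).im - f 0| with hε
    have hεpos : 0 < ε := abs_pos.mpr (sub_ne_zero.mpr hne)
    obtain ⟨δ, hδpos, hδ⟩ := Metric.continuousAt_iff.mp (hW.continuous.continuousAt (x := κ))
      (ε / (2 * Real.pi + 1)) (by positivity)
    obtain ⟨S, hS⟩ := hl δ hδpos
    have hbound : ∀ t : ℝ, |gg (S, t) - (W κ).im| ≤ ε / (2 * Real.pi + 1) := by
      intro t
      have h1 := hS t
      have h2 : dist (W (v (S, t))) (W κ) < ε / (2 * Real.pi + 1) :=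
        hδ (by rwa [dist_eq_norm])
      calc |gg (S, t) - (W κ).im| = |(W (v (S, t)) - W κ).im| := by
            simp [hgg, Complex.sub_im]
        _ ≤ ‖W (v (S, t)) - W κ‖ := Complex.abs_im_le_norm _
        _ ≤ ε / (2 * Real.pi + 1) := le_of_lt (by rwa [Complex.dist_eq] at h2)
    have hi1 : IntervalIntegrable (fun t => gg (S, t)) volume 0 (2 * Real.pi) := by
      apply Continuous.intervalIntegrable
      exact hggc.comp (continuous_const.prodMk continuous_id)
    have hi2 : IntervalIntegrable (fun _ : ℝ => (W κ).im) volume 0 (2 * Real.pi) :=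
      intervalIntegrable_const
    have hsub := intervalIntegral.integral_sub hi1 hi2
    have hfS : f S - 2 * Real.pi * (W κ).im
        = ∫ t in (0:ℝ)..(2 * Real.pi), (gg (S, t) - (W κ).im) := by
      rw [hsub, intervalIntegral.integral_const, smul_eq_mul]
      have hfS' : f S = ∫ t in (0:ℝ)..(2 * Real.pi), gg (S, t) := rfl
      rw [hfS']
      ring
    have hest : ‖∫ t in (0:ℝ)..(2 * Real.pi), (gg (S, t) - (W κ).im)‖
        ≤ (ε / (2 * Real.pi + 1)) * |2 * Real.pi - 0| :=
      intervalIntegral.norm_integral_le_of_norm_le_const fun t _ => by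
        simpa [Real.norm_eq_abs] using hbound t
    rw [← hfS, Real.norm_eq_abs, hconst S, sub_zero, _root_.abs_of_nonneg twopi_pos.le] at hest
    have hle2 : ε ≤ (ε / (2 * Real.pi + 1)) * (2 * Real.pi) := by
      calc ε = |2 * Real.pi * (W κ).im - f 0| := hε
        _ = |f 0 - 2 * Real.pi * (W κ).im| := abs_sub_comm _ _
        _ ≤ _ := hest
    have hlt : (ε / (2 * Real.pi + 1)) * (2 * Real.pi) < ε := by
      rw [div_mul_eq_mul_div, div_lt_iff₀ (by positivity)]
      nlinarith [Real.pi_pos]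
    linarith
  have hp : 2 * Real.pi * (W κp).im = f 0 := by
    apply hlimit κp
    intro ε hε
    obtain ⟨S, hS⟩ := hlimp ε hε
    exact ⟨S, fun t => (hS S le_rfl t).1⟩
  have hm : 2 * Real.pi * (W κm).im = f 0 := by
    apply hlimit κm
    intro ε hε
    obtain ⟨S, hS⟩ := hlimm ε hε
    exact ⟨S, fun t => (hS S le_rfl t).1⟩
  have := hp.trans hm.symm
  exact (mul_left_cancel₀ (by positivity : (2 * Real.pi) ≠ 0) this.symm)
end
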